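/- arXiv:1403.4168 — 4 statements merged into one kernel-verified Lean document; each statement's English description precedes it below -/
import Mathlib

section
/- For every integer n ≥ 1 and every ω ∈ ℝ, the function t ↦ c_n(ωt)·e^{-t^{2n}/(2n)} is Lebesgue integrable on ℝ and ∫_ℝ c_n(ωt) e^{-t^{2n}/(2n)} dt = e^{-ω^{2n}/(2n)}; in other words, the n-Gaussian g_n(t) = e^{-t^{2n}/(2n)} is invariant under the integral transform with kernel c_n. -/
open MeasureTheory

/-- The power-series coefficients `c(n;l) = (-1)^l n / ((2n)^{2l+1/(2n)} Γ(l+1/(2n)) l!)`. -/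
noncomputable def ccoef (n l : ℕ) : ℝ :=
  ((-1) ^ l * (n : ℝ)) /
    ((2 * (n : ℝ)) ^ (2 * (l : ℝ) + 1 / (2 * (n : ℝ))) *
      Real.Gamma ((l : ℝ) + 1 / (2 * (n : ℝ))) * (Nat.factorial l))

/-- The kernel `c_n(η) = Σ_{l=0}^∞ c(n;l) η^{2nl}`. -/
noncomputable def cnKernel (n : ℕ) (η : ℝ) : ℝ :=
  ∑' l : ℕ, ccoef n l * η ^ (2 * n * l)

lemma ccoef_succ (n : ℕ) (hn : 1 ≤ n) (l : ℕ) :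
    ccoef n (l + 1) =
      ccoef n l * (-1 / ((2 * (n : ℝ)) ^ 2 * ((l : ℝ) + 1 / (2 * (n : ℝ))) * ((l : ℝ) + 1))) := by
  have hP : (0:ℝ) < 2 * n := by positivity
  have ha : (0:ℝ) < 1 / (2 * (n:ℝ)) := by positivity
  have hla : (0:ℝ) < (l:ℝ) + 1 / (2 * (n:ℝ)) := by positivity
  have hG : Real.Gamma (((l+1 : ℕ) : ℝ) + 1 / (2 * (n:ℝ)))
      = ((l:ℝ) + 1 / (2 * (n:ℝ))) * Real.Gamma ((l:ℝ) + 1 / (2 * (n:ℝ))) := by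
    push_cast
    rw [show (l:ℝ) + 1 + 1 / (2 * (n:ℝ)) = ((l:ℝ) + 1 / (2 * (n:ℝ))) + 1 by ring,
      Real.Gamma_add_one hla.ne']
  have hpow : (2 * (n:ℝ)) ^ (2 * ((l+1 : ℕ) : ℝ) + 1 / (2 * (n:ℝ)))
      = (2 * (n:ℝ)) ^ (2 * (l : ℝ) + 1 / (2 * (n:ℝ))) * (2 * (n:ℝ)) ^ 2 := by
    push_cast
    rw [show 2 * ((l:ℝ) + 1) + 1 / (2 * (n:ℝ)) = (2 * (l:ℝ) + 1 / (2 * (n:ℝ))) + 2 by ring,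
      Real.rpow_add hP, Real.rpow_two]
  have hGpos := Real.Gamma_pos_of_pos hla
  have hppos := Real.rpow_pos_of_pos hP (2 * (l : ℝ) + 1 / (2 * (n:ℝ)))
  have hfac : (0:ℝ) < (Nat.factorial l : ℝ) := by positivity
  simp only [ccoef, hG, hpow, Nat.factorial_succ, pow_succ]
  push_cast
  field_simp

lemma ccoef_ne_zero (n : ℕ) (hn : 1 ≤ n) (l : ℕ) : ccoef n l ≠ 0 := by
  have hP : (0:ℝ) < 2 * n := by positivity
  have hla : (0:ℝ) < (l:ℝ) + 1 / (2 * (n:ℝ)) := by positivity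
  have hGpos := Real.Gamma_pos_of_pos hla
  have hppos := Real.rpow_pos_of_pos hP (2 * (l : ℝ) + 1 / (2 * (n:ℝ)))
  have hfac : (0:ℝ) < (Nat.factorial l : ℝ) := by positivity
  have hn' : (0:ℝ) < (n:ℝ) := by exact_mod_cast hn
  unfold ccoef
  apply div_ne_zero
  · exact mul_ne_zero (pow_ne_zero _ (by norm_num)) hn'.ne'
  · positivity

lemma summable_ccoef (n : ℕ) (hn : 1 ≤ n) (η : ℝ) :
    Summable (fun l : ℕ => ccoef n l * η ^ (2 * n * l)) := by
  rcases eq_or_ne η 0 with rfl | hη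
  · apply summable_of_ne_finset_zero (s := {0})
    intro l hl
    have : 2 * n * l ≠ 0 := by
      simp only [Finset.mem_singleton] at hl
      positivity
    simp [zero_pow this]
  · have hP : (0:ℝ) < 2 * n := by positivity
    have key : ∀ l : ℕ, ccoef n (l+1) * η ^ (2 * n * (l+1)) =
        (ccoef n l * η ^ (2 * n * l)) *
          (-(η ^ (2*n)) / ((2 * (n:ℝ)) ^ 2 * ((l : ℝ) + 1 / (2 * (n:ℝ))) * ((l : ℝ) + 1))) := by
      intro l
      rw [ccoef_succ n hn l, show 2 * n * (l+1) = 2*n*l + 2*n by ring, pow_add]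
      ring
    have hne : ∀ l : ℕ, ccoef n l * η ^ (2 * n * l) ≠ 0 := fun l =>
      mul_ne_zero (ccoef_ne_zero n hn l) (pow_ne_zero _ hη)
    apply summable_of_ratio_test_tendsto_lt_one (l := 0) one_pos
      (Filter.Eventually.of_forall hne)
    have heq : ∀ l : ℕ,
        ‖ccoef n (l+1) * η ^ (2 * n * (l+1))‖ / ‖ccoef n l * η ^ (2 * n * l)‖ =
        ‖η ^ (2*n)‖ / ((2 * (n:ℝ)) ^ 2 * ((l : ℝ) + 1 / (2 * (n:ℝ))) * ((l : ℝ) + 1)) := by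
      intro l
      rw [key l, norm_mul, mul_comm, mul_div_assoc, div_self (norm_ne_zero_iff.mpr (hne l)),
        mul_one, norm_div, norm_neg]
      congr 1
      rw [Real.norm_eq_abs, abs_of_pos]
      positivity
    simp only [heq]
    have : Filter.Tendsto
        (fun l : ℕ => ((2 * (n:ℝ)) ^ 2 * ((l : ℝ) + 1 / (2 * (n:ℝ))) * ((l : ℝ) + 1)))
        Filter.atTop Filter.atTop := by
      apply Filter.Tendsto.atTop_mul_atTop₀
      · apply Filter.Tendsto.const_mul_atTop (by positivity)
        exact Filter.tendsto_atTop_add_const_right _ _ tendsto_natCast_atTop_atTop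
      · exact Filter.tendsto_atTop_add_const_right _ _ tendsto_natCast_atTop_atTop
    have h2 := (this.inv_tendsto_atTop).const_mul (‖η ^ (2*n)‖)
    rw [mul_zero] at h2
    exact h2.congr (fun l => by simp [div_eq_mul_inv])

open Set in
lemma integrable_comp_abs' {f : ℝ → ℝ} (hf : IntegrableOn (fun x => f |x|) (Ioi 0)) :
    Integrable fun x => f |x| := by
  have int_Iic : IntegrableOn (fun x ↦ f |x|) (Iic 0) := by
    rw [← Measure.map_neg_eq_self (volume : Measure ℝ)]
    have m : MeasurableEmbedding fun x : ℝ => -x := (Homeomorph.neg ℝ).measurableEmbedding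
    rw [m.integrableOn_map_iff]
    simp_rw [Function.comp_def, abs_neg, neg_preimage, neg_Iic, neg_zero]
    exact Iff.mpr integrableOn_Ici_iff_integrableOn_Ioi hf
  rw [← integrableOn_univ, ← Iic_union_Ioi (a := (0:ℝ))]
  exact int_Iic.union hf

open Set in
lemma gauss_moment (n : ℕ) (hn : 1 ≤ n) (l : ℕ) :
    Integrable (fun t : ℝ => t ^ (2*n*l) * Real.exp (-(t ^ (2*n)) / (2*(n:ℝ)))) ∧
    ∫ t : ℝ, t ^ (2*n*l) * Real.exp (-(t ^ (2*n)) / (2*(n:ℝ)))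
      = (1/(n:ℝ)) * (2*(n:ℝ)) ^ ((l:ℝ) + 1/(2*(n:ℝ))) * Real.Gamma ((l:ℝ) + 1/(2*(n:ℝ))) := by
  have hn' : (0:ℝ) < (n:ℝ) := by exact_mod_cast hn
  have hP : (0:ℝ) < 2 * n := by positivity
  set F : ℝ → ℝ := fun x => x ^ ((2*n*l : ℕ) : ℝ) * Real.exp (-(1/(2*(n:ℝ))) * x ^ ((2*n : ℕ) : ℝ))
    with hF
  have habs : (fun t : ℝ => t ^ (2*n*l) * Real.exp (-(t ^ (2*n)) / (2*(n:ℝ)))) =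
      fun t => F |t| := by
    funext t
    rw [hF]
    simp only [Real.rpow_natCast]
    rw [((even_two_mul n).mul_right l).pow_abs, (even_two_mul n).pow_abs]
    congr 1
    ring_nf
  have hIoi : IntegrableOn F (Ioi 0) := by
    apply integrableOn_rpow_mul_exp_neg_mul_rpow
    · have : (0:ℝ) ≤ (2*n*l : ℕ) := Nat.cast_nonneg _
      linarith
    · have h1 : (1:ℝ) ≤ (n:ℝ) := by exact_mod_cast hn
      push_cast
      linarith
    · positivity
  have hIoi' : IntegrableOn (fun x => F |x|) (Ioi 0) := by
    apply hIoi.congr_fun _ measurableSet_Ioi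
    intro x hx
    simp only [abs_of_pos (show (0:ℝ) < x from hx)]
  have hint : Integrable (fun t : ℝ => t ^ (2*n*l) * Real.exp (-(t ^ (2*n)) / (2*(n:ℝ)))) := by
    rw [habs]; exact integrable_comp_abs' hIoi'
  refine ⟨hint, ?_⟩
  rw [habs, _root_.integral_comp_abs (f := F), hF]
  rw [integral_rpow_mul_exp_neg_mul_rpow (by positivity) (by
      have : (0:ℝ) ≤ (2*n*l : ℕ) := Nat.cast_nonneg _
      linarith) (by positivity)]
  have hq : (((2*n*l : ℕ) : ℝ) + 1) / ((2*n : ℕ) : ℝ) = (l:ℝ) + 1/(2*(n:ℝ)) := by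
    push_cast
    field_simp
  have hq' : -(((2*n*l : ℕ) : ℝ) + 1) / ((2*n : ℕ) : ℝ) = -((l:ℝ) + 1/(2*(n:ℝ))) := by
    rw [neg_div, hq]
  rw [hq, hq']
  have hb : (1/(2*(n:ℝ))) ^ (-((l:ℝ) + 1/(2*(n:ℝ)))) = (2*(n:ℝ)) ^ ((l:ℝ) + 1/(2*(n:ℝ))) := by
    rw [Real.rpow_neg (by positivity), one_div, Real.inv_rpow hP.le, inv_inv]
  rw [hb]
  have : ((2*n : ℕ) : ℝ) = 2*(n:ℝ) := by push_cast; ring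
  rw [this]
  field_simp

lemma term_int (n : ℕ) (hn : 1 ≤ n) (ω : ℝ) (l : ℕ) :
    Integrable (fun t : ℝ => ccoef n l * (ω*t)^(2*n*l) * Real.exp (-(t^(2*n))/(2*(n:ℝ)))) ∧
    ∫ t : ℝ, ccoef n l * (ω*t)^(2*n*l) * Real.exp (-(t^(2*n))/(2*(n:ℝ)))
      = (-(ω^(2*n)) / (2*(n:ℝ)))^l / (Nat.factorial l) := by
  have hn' : (0:ℝ) < (n:ℝ) := by exact_mod_cast hn
  have hP : (0:ℝ) < 2 * n := by positivity
  obtain ⟨hint, hval⟩ := gauss_moment n hn l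
  have hfun : (fun t : ℝ => ccoef n l * (ω*t)^(2*n*l) * Real.exp (-(t^(2*n))/(2*(n:ℝ))))
      = fun t => (ccoef n l * ω^(2*n*l)) * (t^(2*n*l) * Real.exp (-(t^(2*n))/(2*(n:ℝ)))) := by
    funext t; rw [mul_pow]; ring
  constructor
  · rw [hfun]; exact hint.const_mul _
  · rw [hfun, integral_const_mul, hval]
    have hsplit : (2*(n:ℝ)) ^ (2*(l:ℝ) + 1/(2*(n:ℝ)))
        = (2*(n:ℝ))^l * (2*(n:ℝ)) ^ ((l:ℝ) + 1/(2*(n:ℝ))) := by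
      rw [← Real.rpow_natCast (2*(n:ℝ)) l, ← Real.rpow_add hP]
      congr 1
      ring
    have hla : (0:ℝ) < (l:ℝ) + 1 / (2 * (n:ℝ)) := by positivity
    have hGpos := Real.Gamma_pos_of_pos hla
    have hppos := Real.rpow_pos_of_pos hP ((l : ℝ) + 1/(2*(n:ℝ)))
    have hfac : (0:ℝ) < (Nat.factorial l : ℝ) := by positivity
    unfold ccoef
    rw [hsplit, div_pow, show (-(ω^(2*n)))^l = (-1:ℝ)^l * (ω^(2*n))^l from neg_pow _ _,
      ← pow_mul]
    field_simp


/-- The `n`-Gaussian `g_n(t) = e^{-t^{2n}/(2n)}` is invariant under the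
integral transform with kernel `c_n`. -/
theorem stmt1 (n : ℕ) (hn : 1 ≤ n) (ω : ℝ) :
    Integrable (fun t : ℝ => cnKernel n (ω * t) * Real.exp (-(t ^ (2 * n)) / (2 * (n : ℝ))))
      volume ∧
    ∫ t : ℝ, cnKernel n (ω * t) * Real.exp (-(t ^ (2 * n)) / (2 * (n : ℝ))) =
      Real.exp (-(ω ^ (2 * n)) / (2 * (n : ℝ))) := by
  have hn' : (0:ℝ) < (n:ℝ) := by exact_mod_cast hn
  have hP : (0:ℝ) < 2 * n := by positivity
  set x : ℝ := -(ω ^ (2 * n)) / (2 * (n:ℝ)) with hx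
  set G : ℕ → ℝ → ℝ :=
    fun l t => ccoef n l * (ω*t)^(2*n*l) * Real.exp (-(t^(2*n))/(2*(n:ℝ))) with hG
  have hint : ∀ l, Integrable (G l) := fun l => (term_int n hn ω l).1
  have hval : ∀ l, ∫ t, G l t = x ^ l / (Nat.factorial l) := fun l => (term_int n hn ω l).2
  -- pointwise summability and kernel identity
  have hsummable : ∀ t : ℝ, Summable (fun l => G l t) := by
    intro t
    have := (summable_ccoef n hn (ω*t)).mul_right (Real.exp (-(t^(2*n))/(2*(n:ℝ))))
    exact this
  have hker : ∀ t : ℝ, ∑' l, G l t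
      = cnKernel n (ω * t) * Real.exp (-(t ^ (2 * n)) / (2 * (n:ℝ))) := by
    intro t
    rw [cnKernel, ← tsum_mul_right]
  -- norm integrals
  have hnorm : ∀ l, ∫ t, ‖G l t‖ = |x ^ l / (Nat.factorial l)| := by
    intro l
    obtain ⟨hgi, hgv⟩ := gauss_moment n hn l
    set J : ℝ := ∫ t : ℝ, t ^ (2*n*l) * Real.exp (-(t ^ (2*n)) / (2*(n:ℝ))) with hJ
    have hJnn : 0 ≤ J := by
      rw [hJ]
      apply integral_nonneg
      intro t
      have : (0:ℝ) ≤ t ^ (2*n*l) := ((even_two_mul n).mul_right l).pow_nonneg t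
      positivity
    have h1 : ∀ t : ℝ, ‖G l t‖
        = |ccoef n l * ω^(2*n*l)| * (t^(2*n*l) * Real.exp (-(t^(2*n))/(2*(n:ℝ)))) := by
      intro t
      have ht : (0:ℝ) ≤ t ^ (2*n*l) := ((even_two_mul n).mul_right l).pow_nonneg t
      have : G l t = (ccoef n l * ω^(2*n*l)) * (t^(2*n*l) * Real.exp (-(t^(2*n))/(2*(n:ℝ)))) := by
        rw [hG]; simp only [mul_pow]; ring
      rw [this, norm_mul]
      congr 1
      rw [Real.norm_eq_abs, abs_of_nonneg (by positivity)]
    have h2 : ∫ t, G l t = (ccoef n l * ω^(2*n*l)) * J := by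
      have : (fun t => G l t)
          = fun t => (ccoef n l * ω^(2*n*l)) * (t^(2*n*l) * Real.exp (-(t^(2*n))/(2*(n:ℝ)))) := by
        funext t; rw [hG]; simp only [mul_pow]; ring
      rw [this, integral_const_mul, hJ]
    calc ∫ t, ‖G l t‖
        = |ccoef n l * ω^(2*n*l)| * J := by
          simp only [h1]; rw [integral_const_mul, hJ]
      _ = |ccoef n l * ω^(2*n*l) * J| := by
          rw [abs_mul (ccoef n l * ω^(2*n*l)) J, abs_of_nonneg hJnn]
      _ = |x ^ l / (Nat.factorial l)| := by rw [← h2, hval l]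
  have hsum : Summable (fun l : ℕ => ∫ t, ‖G l t‖) := by
    apply Summable.congr (Real.summable_pow_div_factorial x).abs
    intro l
    rw [hnorm l]
  -- the HasSum of integrals
  have H := MeasureTheory.hasSum_integral_of_summable_integral_norm hint hsum
  simp only [hval] at H
  have hexp : HasSum (fun l : ℕ => x ^ l / (Nat.factorial l)) (Real.exp x) := by
    have hs := (Real.summable_pow_div_factorial x).hasSum
    have : Real.exp x = ∑' l : ℕ, x ^ l / (Nat.factorial l) := by
      rw [Real.exp_eq_exp_ℝ, NormedSpace.exp_eq_tsum_div]
    rw [this]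
    exact hs
  have hIval : ∫ t, ∑' l, G l t = Real.exp x := H.unique hexp
  -- integrability
  have hcont : ∀ l, Continuous (G l) := by
    intro l
    rw [hG]
    fun_prop
  have haesm : AEStronglyMeasurable
      (fun t : ℝ => cnKernel n (ω * t) * Real.exp (-(t ^ (2 * n)) / (2 * (n:ℝ)))) volume := by
    apply aestronglyMeasurable_of_tendsto_ae (u := Filter.atTop)
      (f := fun N (t : ℝ) => ∑ l ∈ Finset.range N, G l t)
    · intro N
      exact (continuous_finset_sum _ (fun l _ => hcont l)).aestronglyMeasurable
    · apply Filter.Eventually.of_forall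
      intro t
      rw [← hker t]
      exact ((hsummable t).hasSum).tendsto_sum_nat
  have hfin : HasFiniteIntegral
      (fun t : ℝ => cnKernel n (ω * t) * Real.exp (-(t ^ (2 * n)) / (2 * (n:ℝ)))) volume := by
    rw [hasFiniteIntegral_iff_norm]
    calc ∫⁻ t, ENNReal.ofReal ‖cnKernel n (ω * t) * Real.exp (-(t ^ (2 * n)) / (2 * (n:ℝ)))‖
        ≤ ∫⁻ t, ∑' l, ENNReal.ofReal ‖G l t‖ := by
          apply lintegral_mono
          intro t
          have hb : ‖cnKernel n (ω * t) * Real.exp (-(t ^ (2 * n)) / (2 * (n:ℝ)))‖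
              ≤ ∑' l, ‖G l t‖ := by
            rw [← hker t]
            exact norm_tsum_le_tsum_norm ((hsummable t).abs)
          calc ENNReal.ofReal ‖cnKernel n (ω * t) * Real.exp (-(t ^ (2 * n)) / (2 * (n:ℝ)))‖
              ≤ ENNReal.ofReal (∑' l, ‖G l t‖) := ENNReal.ofReal_le_ofReal hb
            _ = ∑' l, ENNReal.ofReal ‖G l t‖ :=
                ENNReal.ofReal_tsum_of_nonneg (fun l => norm_nonneg _) ((hsummable t).abs)
      _ = ∑' l, ∫⁻ t, ENNReal.ofReal ‖G l t‖ := by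
          apply lintegral_tsum
          intro l
          exact (ENNReal.continuous_ofReal.comp (hcont l).norm).measurable.aemeasurable
      _ = ∑' l, ENNReal.ofReal (∫ t, ‖G l t‖) := by
          congr 1
          funext l
          rw [MeasureTheory.ofReal_integral_norm_eq_lintegral_enorm (hint l)]
          simp_rw [ofReal_norm_eq_enorm]
      _ = ENNReal.ofReal (∑' l, ∫ t, ‖G l t‖) :=
          (ENNReal.ofReal_tsum_of_nonneg
            (fun l => integral_nonneg (fun t => norm_nonneg _)) hsum).symm
      _ < ⊤ := ENNReal.ofReal_lt_top
  refine ⟨⟨haesm, hfin⟩, ?_⟩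
  rw [← hIval]
  congr 1
  funext t
  rw [hker t]
end

section
/- For every integer n ≥ 1, every real α > 0 and every ω ∈ ℝ, ∫_ℝ c_n(ωt)·e^{-α·t^{2n}/(2n)} dt = α^{-1/(2n)}·e^{-ω^{2n}/(2nα)}; that is, the even part of the transform Φ_n maps the scaled n-Gaussian t ↦ e^{-α t^{2n}/(2n)} to α^{-1/(2n)}·e^{-ω^{2n}/(2nα)}, the identity underlying the construction of the even eigenfunctions of Φ_n. -/
open MeasureTheory

open Set

lemma even_integrable_aux {f : ℝ → ℝ} (hf : ∀ x, f (-x) = f x)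
    (h : IntegrableOn f (Ioi (0:ℝ))) : Integrable f := by
  have hIic : IntegrableOn f (Iic (0:ℝ)) := by
    rw [← Measure.map_neg_eq_self (volume : Measure ℝ)]
    have m : MeasurableEmbedding fun x : ℝ => -x :=
      (Homeomorph.neg ℝ).measurableEmbedding
    rw [m.integrableOn_map_iff]
    simp_rw [Function.comp_def, hf, neg_preimage, neg_Iic, neg_zero]
    exact Iff.mpr integrableOn_Ici_iff_integrableOn_Ioi h
  have h2 := hIic.union h
  rwa [Iic_union_Ioi, integrableOn_univ] at h2

lemma integrable_pow_gauss (k m : ℕ) (hk : Even k) (hm : Even m) (hm1 : 1 ≤ m) {b : ℝ}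
    (hb : 0 < b) : Integrable (fun t : ℝ => t ^ k * Real.exp (-b * t ^ m)) := by
  apply even_integrable_aux
  · intro x; rw [hk.neg_pow, hm.neg_pow]
  · have h := integrableOn_rpow_mul_exp_neg_mul_rpow (p := (m:ℝ)) (s := (k:ℝ))
      (lt_of_lt_of_le (by norm_num) (Nat.cast_nonneg k)) (by exact_mod_cast hm1) hb
    simpa [Real.rpow_natCast] using h

lemma integral_pow_gauss (k m : ℕ) (hk : Even k) (hm : Even m) (hm1 : 1 ≤ m) {b : ℝ}
    (hb : 0 < b) :
    ∫ t : ℝ, t ^ k * Real.exp (-b * t ^ m) =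
      2 * (b ^ (-((k:ℝ)+1)/(m:ℝ)) * (1/(m:ℝ)) * Real.Gamma (((k:ℝ)+1)/(m:ℝ))) := by
  calc ∫ t : ℝ, t ^ k * Real.exp (-b * t ^ m)
      = ∫ t : ℝ, (fun x : ℝ => x ^ k * Real.exp (-b * x ^ m)) |t| := by
        congr 1; funext t; simp only [hk.pow_abs, hm.pow_abs]
    _ = 2 * ∫ x in Ioi (0:ℝ), x ^ k * Real.exp (-b * x ^ m) :=
        integral_comp_abs (f := fun x : ℝ => x ^ k * Real.exp (-b * x ^ m))
    _ = 2 * ∫ x in Ioi (0:ℝ), x ^ (k:ℝ) * Real.exp (-b * x ^ (m:ℝ)) := by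
        simp [Real.rpow_natCast]
    _ = 2 * (b ^ (-((k:ℝ)+1)/(m:ℝ)) * (1/(m:ℝ)) * Real.Gamma (((k:ℝ)+1)/(m:ℝ))) := by
        rw [integral_rpow_mul_exp_neg_mul_rpow (by positivity)
          (lt_of_lt_of_le (by norm_num) (Nat.cast_nonneg k)) hb]

lemma coeff_algebra (n l : ℕ) (hn : 1 ≤ n) {α : ℝ} (hα : 0 < α) (ω : ℝ) :
    ccoef n l * ω ^ (2*n*l) *
      (2 * ((α/(2*(n:ℝ))) ^ (-(2*(n:ℝ)*(l:ℝ)+1)/(2*(n:ℝ))) * (1/(2*(n:ℝ))) *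
        Real.Gamma ((2*(n:ℝ)*(l:ℝ)+1)/(2*(n:ℝ))))) =
    α ^ (-(1/(2*(n:ℝ)))) * ((-(ω ^ (2*n)) / (2*(n:ℝ)*α)) ^ l / (l.factorial : ℝ)) := by
  have hN : (0:ℝ) < (n:ℝ) := by exact_mod_cast hn
  have hP : (0:ℝ) < 2*(n:ℝ) := by positivity
  have harg : (2*(n:ℝ)*(l:ℝ)+1)/(2*(n:ℝ)) = (l:ℝ) + 1/(2*(n:ℝ)) := by
    field_simp
  have harg' : -(2*(n:ℝ)*(l:ℝ)+1)/(2*(n:ℝ)) = -((l:ℝ) + 1/(2*(n:ℝ))) := by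
    rw [neg_div, harg]
  rw [harg, harg']
  simp only [ccoef]
  have e1 : (2*(n:ℝ)) ^ (2*(l:ℝ) + 1/(2*(n:ℝ)))
      = (2*(n:ℝ)) ^ l * (2*(n:ℝ)) ^ ((l:ℝ) + 1/(2*(n:ℝ))) := by
    rw [← Real.rpow_natCast (2*(n:ℝ)) l, ← Real.rpow_add hP]
    congr 1; ring
  have e2 : (α/(2*(n:ℝ))) ^ (-((l:ℝ) + 1/(2*(n:ℝ))))
      = (α ^ l)⁻¹ * α ^ (-(1/(2*(n:ℝ)))) * (2*(n:ℝ)) ^ ((l:ℝ) + 1/(2*(n:ℝ))) := by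
    rw [Real.div_rpow hα.le hP.le, Real.rpow_neg hP.le ((l:ℝ) + 1/(2*(n:ℝ))), div_eq_mul_inv, inv_inv,
      show -((l:ℝ) + 1/(2*(n:ℝ))) = -(l:ℝ) + -(1/(2*(n:ℝ))) by ring,
      Real.rpow_add hα, Real.rpow_neg hα.le (l:ℝ), Real.rpow_natCast]
  rw [e1, e2, pow_mul ω (2*n) l, div_pow, neg_pow, mul_pow]
  have hΓ : (0:ℝ) < Real.Gamma ((l:ℝ) + 1/(2*(n:ℝ))) := Real.Gamma_pos_of_pos (by positivity)
  have h1 : (2*(n:ℝ)) ^ ((l:ℝ) + 1/(2*(n:ℝ))) ≠ 0 := (Real.rpow_pos_of_pos hP _).ne'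
  have h2 : Real.Gamma ((l:ℝ) + 1/(2*(n:ℝ))) ≠ 0 := hΓ.ne'
  have h3 : ((l.factorial:ℝ)) ≠ 0 := Nat.cast_ne_zero.mpr (Nat.factorial_ne_zero l)
  have h4 : (2*(n:ℝ))^l ≠ 0 := by positivity
  have h5 : α ^ l ≠ 0 := by positivity
  have h6 : (2*(n:ℝ)) ≠ 0 := hP.ne'
  field_simp
  ring

/-- The even part of `Φ_n` maps the scaled `n`-Gaussian
`t ↦ e^{-α t^{2n}/(2n)}` to `α^{-1/(2n)} e^{-ω^{2n}/(2nα)}`. -/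
theorem stmt8 (n : ℕ) (hn : 1 ≤ n) (α : ℝ) (hα : 0 < α) (ω : ℝ) :
    ∫ t : ℝ, cnKernel n (ω * t) * Real.exp (-(α * t ^ (2 * n)) / (2 * (n : ℝ))) =
      α ^ (-(1 / (2 * (n : ℝ)))) * Real.exp (-(ω ^ (2 * n)) / (2 * (n : ℝ) * α)) := by
  have hN : (0:ℝ) < (n:ℝ) := by exact_mod_cast hn
  have hP : (0:ℝ) < 2*(n:ℝ) := by positivity
  have hb : (0:ℝ) < α / (2*(n:ℝ)) := by positivity
  have h2n : Even (2*n) := even_two_mul n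
  have h2nl : ∀ l : ℕ, Even (2*n*l) := fun l => (even_two_mul n).mul_right l
  have h2n1 : 1 ≤ 2*n := by omega
  set r : ℝ := -(ω ^ (2*n)) / (2*(n:ℝ)*α) with hrdef
  set F : ℕ → ℝ → ℝ := fun l t => ccoef n l * (ω*t) ^ (2*n*l)
      * Real.exp (-(α * t^(2*n)) / (2*(n:ℝ))) with hFdef
  have hFeq : ∀ l : ℕ, F l = fun t => (ccoef n l * ω ^ (2*n*l)) *
      (t ^ (2*n*l) * Real.exp (-(α/(2*(n:ℝ))) * t ^ (2*n))) := by
    intro l; funext t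
    have h1 : -(α * t^(2*n)) / (2*(n:ℝ)) = -(α/(2*(n:ℝ))) * t^(2*n) := by ring
    simp only [hFdef, h1, mul_pow]; ring
  have hInt : ∀ l, Integrable (F l) := fun l => by
    rw [hFeq l]; exact (integrable_pow_gauss _ _ (h2nl l) h2n h2n1 hb).const_mul _
  have hA : ∀ l : ℕ, ∫ t : ℝ, F l t = α ^ (-(1/(2*(n:ℝ)))) * (r ^ l / (l.factorial : ℝ)) := by
    intro l
    simp only [hFeq l]
    rw [integral_const_mul, integral_pow_gauss _ _ (h2nl l) h2n h2n1 hb, hrdef]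
    push_cast
    exact coeff_algebra n l hn hα ω
  have hnorm : ∀ l : ℕ, ∫ t : ℝ, ‖F l t‖ = |∫ t : ℝ, F l t| := by
    intro l
    have hg : ∀ t : ℝ, 0 ≤ t ^ (2*n*l) * Real.exp (-(α/(2*(n:ℝ))) * t ^ (2*n)) := fun t =>
      mul_nonneg ((h2nl l).pow_nonneg t) (Real.exp_nonneg _)
    simp only [hFeq l]
    calc ∫ t : ℝ, ‖(ccoef n l * ω ^ (2*n*l)) *
          (t ^ (2*n*l) * Real.exp (-(α/(2*(n:ℝ))) * t ^ (2*n)))‖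
        = ∫ t : ℝ, |ccoef n l * ω ^ (2*n*l)| *
          (t ^ (2*n*l) * Real.exp (-(α/(2*(n:ℝ))) * t ^ (2*n))) := by
          congr 1; funext t; rw [Real.norm_eq_abs, abs_mul, abs_of_nonneg (hg t)]
      _ = |ccoef n l * ω ^ (2*n*l)| *
          ∫ t : ℝ, t ^ (2*n*l) * Real.exp (-(α/(2*(n:ℝ))) * t ^ (2*n)) := integral_const_mul _ _
      _ = |(ccoef n l * ω ^ (2*n*l)) *
          ∫ t : ℝ, t ^ (2*n*l) * Real.exp (-(α/(2*(n:ℝ))) * t ^ (2*n))| := by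
          rw [abs_mul (ccoef n l * ω ^ (2*n*l))
            (∫ t : ℝ, t ^ (2*n*l) * Real.exp (-(α/(2*(n:ℝ))) * t ^ (2*n))),
            abs_of_nonneg (integral_nonneg hg)]
      _ = |∫ t : ℝ, (ccoef n l * ω ^ (2*n*l)) *
          (t ^ (2*n*l) * Real.exp (-(α/(2*(n:ℝ))) * t ^ (2*n)))| := by
          rw [integral_const_mul]
  have hval : ∀ l : ℕ, α ^ (-(1/(2*(n:ℝ)))) * (|r| ^ l / (l.factorial : ℝ))
      = ∫ t : ℝ, ‖F l t‖ := by
    intro l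
    rw [hnorm l, hA l, abs_mul, abs_of_nonneg (Real.rpow_pos_of_pos hα _).le,
      ← abs_pow, abs_div, Nat.abs_cast]
  have hsum : Summable fun l : ℕ => ∫ t : ℝ, ‖F l t‖ :=
    (((Real.summable_pow_div_factorial |r|).mul_left _)).congr hval
  calc ∫ t : ℝ, cnKernel n (ω*t) * Real.exp (-(α * t^(2*n)) / (2*(n:ℝ)))
      = ∫ t : ℝ, ∑' l : ℕ, F l t := by
        congr 1; funext t
        simp only [hFdef, cnKernel]
        rw [← tsum_mul_right]
    _ = ∑' l : ℕ, ∫ t : ℝ, F l t :=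
        (integral_tsum_of_summable_integral_norm hInt hsum).symm
    _ = ∑' l : ℕ, α ^ (-(1/(2*(n:ℝ)))) * (r ^ l / (l.factorial : ℝ)) := tsum_congr hA
    _ = α ^ (-(1/(2*(n:ℝ)))) * ∑' l : ℕ, r ^ l / (l.factorial : ℝ) := tsum_mul_left
    _ = α ^ (-(1 / (2 * (n:ℝ)))) * Real.exp (-(ω ^ (2 * n)) / (2 * (n:ℝ) * α)) := by
        rw [hrdef, Real.exp_eq_exp_ℝ, NormedSpace.exp_eq_tsum_div]
end

section
/- Let U be a unitary operator on L²(ℝ, ℂ). Let g₁, g₂, h₁, h₂ ∈ L²(ℝ, ℂ) and suppose that for every t ∈ ℝ the functions s ↦ g₁(s-t)·h₁(s) and s ↦ g₂(s-t)·h₂(s) belong to L²(ℝ, ℂ). Define V_i(ω, t) = U(g_{i,t}·h_i)(ω), where g_{i,t}(s) = g_i(s-t). Then the orthogonality relation ∫_ℝ (∫_ℝ V₁(ω, t)·conj(V₂(ω, t)) dω) dt = (∫_ℝ g₁·conj(g₂))·(∫_ℝ h₁·conj(h₂)) = ⟨g₁, g₂⟩·⟨h₁, h₂⟩ holds. -/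
open MeasureTheory

section StmtAux

variable {α : Type*}

/-- Inner-integral step: the `ω`-integral is the `L²` inner product, preserved by the
isometry `U`, so it equals the pointwise integral of the windowed products. -/
theorem stmt18_inner (U : Lp ℂ 2 (volume : Measure ℝ) →L[ℂ] Lp ℂ 2 (volume : Measure ℝ))
    (hiso : ∀ x, ‖U x‖ = ‖x‖) (f₁ f₂ : ℝ → ℂ)
    (h₁ : MemLp f₁ 2 (volume : Measure ℝ)) (h₂ : MemLp f₂ 2 (volume : Measure ℝ)) :
    ∫ ω : ℝ, (U (h₁.toLp f₁)) ω * (starRingEnd ℂ) ((U (h₂.toLp f₂)) ω)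
      = ∫ s : ℝ, f₁ s * (starRingEnd ℂ) (f₂ s) := by
  let Ui : Lp ℂ 2 (volume : Measure ℝ) →ₗᵢ[ℂ] Lp ℂ 2 (volume : Measure ℝ) :=
    ⟨U.toLinearMap, hiso⟩
  have e1 : ∫ ω : ℝ, (U (h₁.toLp f₁)) ω * (starRingEnd ℂ) ((U (h₂.toLp f₂)) ω)
      = inner (𝕜 := ℂ) (U (h₂.toLp f₂)) (U (h₁.toLp f₁)) := by
    rw [L2.inner_def]
    refine integral_congr_ae (Filter.Eventually.of_forall fun ω => ?_)
    simp only [RCLike.inner_apply, starRingEnd_apply]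
  rw [e1]
  have e2 : inner (𝕜 := ℂ) (U (h₂.toLp f₂)) (U (h₁.toLp f₁))
      = inner (𝕜 := ℂ) (h₂.toLp f₂) (h₁.toLp f₁) := Ui.inner_map_map _ _
  rw [e2, L2.inner_def]
  refine integral_congr_ae ?_
  filter_upwards [h₁.coeFn_toLp, h₂.coeFn_toLp] with s e3 e4
  simp only [RCLike.inner_apply]; rw [e3, e4]

/-- A conjugate of an `L²` function is `L²`. -/
theorem stmt18_conj_memℒp (g : ℝ → ℂ) (hg : MemLp g 2 (volume : Measure ℝ)) :
    MemLp (fun s => (starRingEnd ℂ) (g s)) 2 (volume : Measure ℝ) := by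
  have hm : AEStronglyMeasurable (fun s => (starRingEnd ℂ) (g s)) (volume : Measure ℝ) :=
    RCLike.continuous_conj.comp_aestronglyMeasurable hg.1
  exact MemLp.of_le hg hm (Filter.Eventually.of_forall fun x => by rw [RCLike.norm_conj])

/-- The product of two `L²` functions is integrable. -/
theorem stmt18_mul_integrable (f g : ℝ → ℂ) (hf : MemLp f 2 (volume : Measure ℝ))
    (hg : MemLp g 2 (volume : Measure ℝ)) :
    Integrable (fun s => f s * g s) (volume : Measure ℝ) := by
  have h1 : (1 : ENNReal) / 1 = 1 / 2 + 1 / 2 := by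
    rw [ENNReal.div_add_div_same, one_add_one_eq_two,
      ENNReal.div_self two_ne_zero ENNReal.ofNat_ne_top, one_div_one]
  have := hg.smul (φ := f) (r := 1) hf
  rw [memLp_one_iff_integrable] at this
  simpa [smul_eq_mul, Pi.mul_def] using this

/-- The shear-like map `(t, s) ↦ (s - t, s)` preserves `volume × volume`. -/
theorem stmt18_shear : MeasurePreserving (fun p : ℝ × ℝ => (p.2 - p.1, p.2))
    ((volume : Measure ℝ).prod volume) ((volume : Measure ℝ).prod volume) := by
  have h1 := (measurePreserving_prod_add_right (volume : Measure ℝ) volume).comp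
    ((measurePreserving_sub_prod (volume : Measure ℝ) volume).comp
      (Measure.measurePreserving_swap (μ := (volume : Measure ℝ)) (ν := volume)))
  convert h1 using 1
  funext p
  simp [Function.comp]

end StmtAux

/-- Orthogonality relation for short-time transforms: if `U` is a unitary
operator on `L²(ℝ, ℂ)` and `V_i(ω, t) = U(g_{i,t} · h_i)(ω)` with `g_{i,t}(s) = g_i(s-t)`, then
`∫∫ V₁(ω,t) conj(V₂(ω,t)) dω dt = ⟨g₁, g₂⟩ ⟨h₁, h₂⟩`. -/
theorem stmt18 (U : Lp ℂ 2 (volume : Measure ℝ) →L[ℂ] Lp ℂ 2 (volume : Measure ℝ))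
    (hiso : ∀ x, ‖U x‖ = ‖x‖) (hsurj : Function.Surjective U)
    (g₁ g₂ h₁ h₂ : ℝ → ℂ)
    (hg₁ : MemLp g₁ 2 (volume : Measure ℝ)) (hg₂ : MemLp g₂ 2 (volume : Measure ℝ))
    (hh₁ : MemLp h₁ 2 (volume : Measure ℝ)) (hh₂ : MemLp h₂ 2 (volume : Measure ℝ))
    (hprod₁ : ∀ t : ℝ, MemLp (fun s : ℝ => g₁ (s - t) * h₁ s) 2 (volume : Measure ℝ))
    (hprod₂ : ∀ t : ℝ, MemLp (fun s : ℝ => g₂ (s - t) * h₂ s) 2 (volume : Measure ℝ)) :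
    ∫ t : ℝ, ∫ ω : ℝ,
        (U ((hprod₁ t).toLp (fun s : ℝ => g₁ (s - t) * h₁ s))) ω *
          (starRingEnd ℂ) ((U ((hprod₂ t).toLp (fun s : ℝ => g₂ (s - t) * h₂ s))) ω) =
      (∫ s : ℝ, g₁ s * (starRingEnd ℂ) (g₂ s)) * (∫ s : ℝ, h₁ s * (starRingEnd ℂ) (h₂ s)) := by
  -- abbreviations for the two `L¹` products
  set φ : ℝ → ℂ := fun s => g₁ s * (starRingEnd ℂ) (g₂ s) with hφdef
  set ψ : ℝ → ℂ := fun s => h₁ s * (starRingEnd ℂ) (h₂ s) with hψdef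
  have hφ : Integrable φ (volume : Measure ℝ) :=
    stmt18_mul_integrable _ _ hg₁ (stmt18_conj_memℒp _ hg₂)
  have hψ : Integrable ψ (volume : Measure ℝ) :=
    stmt18_mul_integrable _ _ hh₁ (stmt18_conj_memℒp _ hh₂)
  -- Step 1: compute the inner integral for each t
  have step1 : ∀ t : ℝ,
      ∫ ω : ℝ, (U ((hprod₁ t).toLp (fun s : ℝ => g₁ (s - t) * h₁ s))) ω *
          (starRingEnd ℂ) ((U ((hprod₂ t).toLp (fun s : ℝ => g₂ (s - t) * h₂ s))) ω)
        = ∫ s : ℝ, φ (s - t) * ψ s := by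
    intro t
    rw [stmt18_inner U hiso _ _ (hprod₁ t) (hprod₂ t)]
    refine integral_congr_ae (Filter.Eventually.of_forall fun s => ?_)
    simp only [hφdef, hψdef, map_mul]
    ring
  rw [integral_congr_ae (Filter.Eventually.of_forall step1)]
  -- Step 2: joint integrability
  have hF : Integrable (fun p : ℝ × ℝ => φ p.1 * ψ p.2)
      ((volume : Measure ℝ).prod volume) := hφ.mul_prod hψ
  have hFT : Integrable (Function.uncurry fun t s : ℝ => φ (s - t) * ψ s)
      ((volume : Measure ℝ).prod volume) := by
    have := (stmt18_shear.integrable_comp hF.1).mpr hF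
    exact this
  -- Step 3: Fubini and translation invariance
  rw [integral_integral_swap hFT]
  have step3 : ∀ s : ℝ, ∫ t : ℝ, φ (s - t) * ψ s = (∫ u : ℝ, φ u) * ψ s := by
    intro s
    rw [integral_mul_const]
    congr 1
    exact integral_sub_left_eq_self φ volume s
  rw [integral_congr_ae (Filter.Eventually.of_forall step3), integral_const_mul]
end

section
/- Let U be a unitary operator on L²(ℝ, ℂ). Let g, h ∈ L²(ℝ, ℂ) with ∫_ℝ |g|² = 1, and suppose that for every t ∈ ℝ the function s ↦ g(s-t)·h(s) belongs to L²(ℝ, ℂ). Define V(ω, t) = U(g_t·h)(ω), where g_t(s) = g(s-t). Then ∫_ℝ (∫_ℝ |V(ω, t)|² dω) dt = ∫_ℝ |h|²; that is, the short-time transform with an L²-normalized window preserves the energy of the signal and is an isometry from L²(ℝ) into L²(ℝ²). -/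
open MeasureTheory
open scoped ENNReal

private theorem l2sq (f : Lp ℂ 2 (volume : Measure ℝ)) :
    (∫ ω : ℝ, ‖f ω‖ ^ 2) = ‖f‖ ^ 2 := by
  rw [norm_sq_eq_re_inner (𝕜 := ℂ) f, L2.inner_def, ← integral_re (L2.integrable_inner f f)]
  exact integral_congr_ae (Filter.Eventually.of_forall fun x => norm_sq_eq_re_inner (𝕜 := ℂ) (f x))

private theorem sq_lintegral_lt_top {f : ℝ → ℂ} (hf : MemLp f 2 (volume : Measure ℝ)) :
    (∫⁻ s : ℝ, (‖f s‖₊ : ℝ≥0∞) ^ (2 : ℕ)) < ∞ := by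
  have h := lintegral_rpow_enorm_lt_top_of_eLpNorm_lt_top (p := 2) two_ne_zero
    ENNReal.ofNat_ne_top hf.2
  have h2 : ((2 : ℝ≥0∞)).toReal = ((2 : ℕ) : ℝ) := by simp
  simp [h2, ENNReal.rpow_natCast] at h; exact h

/-- Energy preservation for short-time transforms: if `U` is a unitary
operator on `L²(ℝ, ℂ)`, `g` is an `L²`-normalized window and `V(ω, t) = U(g_t · h)(ω)` with
`g_t(s) = g(s-t)`, then `∫∫ |V(ω,t)|² dω dt = ∫ |h|²`. -/
theorem stmt19 (U : Lp ℂ 2 (volume : Measure ℝ) →L[ℂ] Lp ℂ 2 (volume : Measure ℝ))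
    (hiso : ∀ x, ‖U x‖ = ‖x‖) (hsurj : Function.Surjective U)
    (g h : ℝ → ℂ) (hg : MemLp g 2 (volume : Measure ℝ)) (hh : MemLp h 2 (volume : Measure ℝ))
    (hnorm : (∫ s : ℝ, ‖g s‖ ^ 2) = 1)
    (hprod : ∀ t : ℝ, MemLp (fun s : ℝ => g (s - t) * h s) 2 (volume : Measure ℝ)) :
    ∫ t : ℝ, ∫ ω : ℝ, ‖(U ((hprod t).toLp (fun s : ℝ => g (s - t) * h s))) ω‖ ^ 2 =
      ∫ s : ℝ, ‖h s‖ ^ 2 := by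
  have key : ∀ t : ℝ,
      (∫ ω : ℝ, ‖(U ((hprod t).toLp (fun s : ℝ => g (s - t) * h s))) ω‖ ^ 2)
        = ∫ s : ℝ, ‖g (s - t)‖ ^ 2 * ‖h s‖ ^ 2 := by
    intro t
    rw [l2sq, hiso, ← l2sq]
    have hcongr : (∫ ω : ℝ, ‖((hprod t).toLp (fun s : ℝ => g (s - t) * h s)) ω‖ ^ 2)
        = ∫ s : ℝ, ‖g (s - t) * h s‖ ^ 2 := by
      refine integral_congr_ae ?_
      filter_upwards [(hprod t).coeFn_toLp] with x hx
      rw [hx]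
    rw [hcongr]
    simp_rw [norm_mul, mul_pow]
  simp_rw [key]
  -- replace g, h by measurable representatives g', h'
  set g' := hg.1.mk g with hg'def
  have hg'm : StronglyMeasurable g' := hg.1.stronglyMeasurable_mk
  have hgg' : g =ᵐ[volume] g' := hg.1.ae_eq_mk
  set h' := hh.1.mk h with hh'def
  have hh'm : StronglyMeasurable h' := hh.1.stronglyMeasurable_mk
  have hhh' : h =ᵐ[volume] h' := hh.1.ae_eq_mk
  have hg'2 : MemLp g' 2 (volume : Measure ℝ) := hg.ae_eq hgg'
  have hh'2 : MemLp h' 2 (volume : Measure ℝ) := hh.ae_eq hhh'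
  have htrans : ∀ t : ℝ, (fun s : ℝ => g (s - t)) =ᵐ[volume] fun s : ℝ => g' (s - t) := by
    intro t
    have hmp : MeasurePreserving (fun s : ℝ => s - t) volume volume :=
      measurePreserving_sub_right volume t
    exact hmp.quasiMeasurePreserving.ae_eq_comp hgg'
  have inner_eq : ∀ t : ℝ, (∫ s : ℝ, ‖g (s - t)‖ ^ 2 * ‖h s‖ ^ 2)
      = ∫ s : ℝ, ‖g' (s - t)‖ ^ 2 * ‖h' s‖ ^ 2 := by
    intro t
    refine integral_congr_ae ?_
    filter_upwards [htrans t, hhh'] with s h1 h2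
    rw [h1, h2]
  simp_rw [inner_eq]
  have hrhs : (∫ s : ℝ, ‖h s‖ ^ 2) = ∫ s : ℝ, ‖h' s‖ ^ 2 :=
    integral_congr_ae (by filter_upwards [hhh'] with s hs; rw [hs])
  rw [hrhs]
  have hnorm' : (∫ s : ℝ, ‖g' s‖ ^ 2) = 1 := by
    rw [← hnorm]
    exact (integral_congr_ae (by filter_upwards [hgg'] with s hs; rw [hs])).symm
  -- Integrability on the product space
  set F : ℝ × ℝ → ℝ := fun p => ‖g' (p.2 - p.1)‖ ^ 2 * ‖h' p.2‖ ^ 2 with hFdef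
  have hFm : Measurable F := by
    exact (((hg'm.measurable.comp (measurable_snd.sub measurable_fst)).norm).pow_const 2).mul
      (((hh'm.measurable.comp measurable_snd).norm).pow_const 2)
  have hEg : (∫⁻ u : ℝ, (‖g' u‖₊ : ℝ≥0∞) ^ (2 : ℕ)) < ∞ := sq_lintegral_lt_top hg'2
  have hEh : (∫⁻ u : ℝ, (‖h' u‖₊ : ℝ≥0∞) ^ (2 : ℕ)) < ∞ := sq_lintegral_lt_top hh'2
  have hinner_lint : ∀ s : ℝ,
      (∫⁻ t : ℝ, (‖g' (s - t)‖₊ : ℝ≥0∞) ^ (2 : ℕ)) = ∫⁻ u : ℝ, (‖g' u‖₊ : ℝ≥0∞) ^ (2 : ℕ) := by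
    intro s
    have hmp : MeasurePreserving (fun t : ℝ => s - t) volume volume :=
      Measure.measurePreserving_sub_left volume s
    exact hmp.lintegral_comp (((hg'm.measurable.enorm)).pow_const 2)
  have hInt : Integrable F (volume.prod volume) := by
    refine ⟨hFm.aestronglyMeasurable, ?_⟩
    rw [hasFiniteIntegral_def, lintegral_prod_symm _ hFm.enorm.aemeasurable]
    have hpt : ∀ s t : ℝ, (‖F (t, s)‖₊ : ℝ≥0∞)
        = (‖g' (s - t)‖₊ : ℝ≥0∞) ^ (2 : ℕ) * (‖h' s‖₊ : ℝ≥0∞) ^ (2 : ℕ) := by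
      intro s t
      simp only [hFdef, nnnorm_mul, nnnorm_pow, nnnorm_norm, ENNReal.coe_mul, ENNReal.coe_pow]
    calc ∫⁻ s : ℝ, ∫⁻ t : ℝ, (‖F (t, s)‖₊ : ℝ≥0∞)
        = ∫⁻ s : ℝ, (∫⁻ u : ℝ, (‖g' u‖₊ : ℝ≥0∞) ^ (2 : ℕ)) * (‖h' s‖₊ : ℝ≥0∞) ^ (2 : ℕ) := by
          refine lintegral_congr fun s => ?_
          simp_rw [hpt s]
          have hm : Measurable fun t : ℝ => (‖g' (s - t)‖₊ : ℝ≥0∞) ^ (2 : ℕ) :=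
            ((hg'm.measurable.comp (measurable_const.sub measurable_id)).enorm).pow_const 2
          rw [lintegral_mul_const _ hm, hinner_lint s]
      _ = (∫⁻ u : ℝ, (‖g' u‖₊ : ℝ≥0∞) ^ (2 : ℕ)) * ∫⁻ s : ℝ, (‖h' s‖₊ : ℝ≥0∞) ^ (2 : ℕ) := by
          exact lintegral_const_mul _ ((hh'm.measurable.enorm).pow_const 2)
      _ < ∞ := ENNReal.mul_lt_top hEg hEh
  have hswap := integral_integral_swap
    (f := fun t s : ℝ => ‖g' (s - t)‖ ^ 2 * ‖h' s‖ ^ 2) (μ := volume) (ν := volume) hInt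
  rw [hswap]
  refine integral_congr_ae (Filter.Eventually.of_forall fun s => ?_)
  dsimp only
  rw [integral_mul_const, integral_sub_left_eq_self (fun u : ℝ => ‖g' u‖ ^ 2) volume s,
    hnorm', one_mul]
end
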